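/- For every m ∈ ℕ and ν ∈ Λ, the element e_∞ + γ(m,ν) of Q′ belongs to the fundamental region F′ of the graph G′ if and only if ν = 0 and m > 1. -/

import Mathlib

open Finset

namespace AffineRoots

/-- The vertex set `I = {0,1,…,r}` of the graph. -/
abbrev I (r : ℕ) := Fin (r + 1)

/-- The root lattice `Q = ℤ^I`. -/
abbrev Q (r : ℕ) := I r → ℤ

variable (r : ℕ)

/-- The standard basis vector (simple root) `e_i` of `Q`. -/
def e (i : I r) : Q r := Pi.single i 1

/-- The Cartan pairing matrix `(e_i, e_j) = 2·[i=j] − a_{ij}` attached to a graph with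
`a i j` edges between `i` and `j`. -/
def cartan (a : I r → I r → ℕ) (i j : I r) : ℤ :=
  (if i = j then 2 else 0) - (a i j : ℤ)

/-- The symmetric bilinear form on `Q` determined by the Cartan pairing. -/
def B (a : I r → I r → ℕ) (α β : Q r) : ℤ :=
  ∑ i, ∑ j, α i * cartan r a i j * β j

/-- The reflection `s_i(α) = α − (α,e_i)·e_i`. -/
def refl (a : I r → I r → ℕ) (i : I r) (α : Q r) : Q r :=
  α - B r a α (e r i) • e r i

/-- The Weyl group `W`: the group of bijections of `Q` generated by the reflections. -/
def W (a : I r → I r → ℕ) : Subgroup (Equiv.Perm (Q r)) :=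
  Subgroup.closure {σ | ∃ i : I r, ∀ α, σ α = refl r a i α}

/-- The support of `α` is connected in the graph. -/
def SuppConnected (a : I r → I r → ℕ) (α : Q r) : Prop :=
  ∀ i j : I r, α i ≠ 0 → α j ≠ 0 →
    Relation.ReflTransGen (fun x y => α x ≠ 0 ∧ α y ≠ 0 ∧ 0 < a x y) i j

/-- The fundamental region `F`: nonzero `α ∈ ℕ^I` with connected support and
`(α,e_i) ≤ 0` for all `i`. -/
def Fund (a : I r → I r → ℕ) : Set (Q r) :=
  {α | α ≠ 0 ∧ (∀ i, 0 ≤ α i) ∧ SuppConnected r a α ∧ ∀ i, B r a α (e r i) ≤ 0}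

/-- The real roots: the `W`-orbits of the basis vectors. -/
def RealRoots (a : I r → I r → ℕ) : Set (Q r) :=
  {α | ∃ σ ∈ W r a, ∃ i, α = σ (e r i)}

/-- The imaginary roots: `W·F` and its negative. -/
def ImRoots (a : I r → I r → ℕ) : Set (Q r) :=
  {α | ∃ σ ∈ W r a, ∃ β ∈ Fund r a, α = σ β ∨ α = -(σ β)}

/-- The root system `R`, consisting of all real and imaginary roots. -/
def Roots (a : I r → I r → ℕ) : Set (Q r) := RealRoots r a ∪ ImRoots r a

/-- The positive roots `R⁺ = R ∩ ℕ^I`. -/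
def PosRoots (a : I r → I r → ℕ) : Set (Q r) :=
  {α ∈ Roots r a | ∀ i, 0 ≤ α i}

/-- `R_c = {α ∈ R : c(α) = 0}`. -/
def Rc (a : I r → I r → ℕ) (c : Q r →ₗ[ℤ] ℂ) : Set (Q r) :=
  {α ∈ Roots r a | c α = 0}

/-- `R_c⁺ = R_c ∩ R⁺`. -/
def RcPos (a : I r → I r → ℕ) (c : Q r →ₗ[ℤ] ℂ) : Set (Q r) :=
  Rc r a c ∩ PosRoots r a

/-- `Δ(c)`: the minimal elements of `R_c⁺`, i.e. those which cannot be written as a sum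
of two elements of `R_c⁺`. -/
def Dc (a : I r → I r → ℕ) (c : Q r →ₗ[ℤ] ℂ) : Set (Q r) :=
  {α ∈ RcPos r a c | ¬ ∃ β ∈ RcPos r a c, ∃ γ ∈ RcPos r a c, α = β + γ}

/-- The hypotheses characterizing a simply laced affine Dynkin graph, together with the
distinguished imaginary root `δ`: the graph (with `a i j` edges between `i` and `j`) is
symmetric, loopless and connected; the Cartan form is positive semidefinite; and the
radical of the form is `ℤδ`, where `δ` has positive coordinates and `δ_0 = 1`. -/
structure AffineData (a : I r → I r → ℕ) (δ : Q r) : Prop where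
  symm : ∀ i j, a i j = a j i
  noloops : ∀ i, a i i = 0
  connected : ∀ i j : I r, Relation.ReflTransGen (fun x y => 0 < a x y) i j
  posSemidef : ∀ α : Q r, 0 ≤ B r a α α
  delta_pos : ∀ i, 0 < δ i
  delta_zero : δ 0 = 1
  radical : ∀ α : Q r, (∀ β, B r a α β = 0) ↔ ∃ n : ℤ, α = n • δ

end AffineRoots

namespace AffineRoots

variable (r : ℕ)

/-- The vertex set `I ∪ {∞}` of the extended graph `G′`; `none` is the vertex `∞`. -/
abbrev I' (r : ℕ) := Option (I r)

/-- The lattice `Q′ = ℤ^{I ∪ {∞}}`. -/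
abbrev Q' (r : ℕ) := I' r → ℤ

/-- The edge-count function of the extended graph `G′`, obtained from `G` by adjoining
a new vertex `∞` joined to the vertex `0` by a single edge. -/
def a' (a : I r → I r → ℕ) : I' r → I' r → ℕ
  | some i, some j => a i j
  | some i, none => if i = 0 then 1 else 0
  | none, some j => if j = 0 then 1 else 0
  | none, none => 0

/-- The standard basis vector `e_x` of `Q′`. -/
def e' (x : I' r) : Q' r := Pi.single x 1

/-- The Cartan pairing matrix of `G′`. -/
def cartan' (a : I r → I r → ℕ) (x y : I' r) : ℤ :=
  (if x = y then 2 else 0) - (a' r a x y : ℤ)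

/-- The symmetric bilinear form on `Q′` determined by the Cartan pairing of `G′`. -/
def B' (a : I r → I r → ℕ) (α β : Q' r) : ℤ :=
  ∑ x, ∑ y, α x * cartan' r a x y * β y

/-- The support of `α ∈ Q′` is connected in `G′`. -/
def SuppConnected' (a : I r → I r → ℕ) (α : Q' r) : Prop :=
  ∀ x y : I' r, α x ≠ 0 → α y ≠ 0 →
    Relation.ReflTransGen (fun u v => α u ≠ 0 ∧ α v ≠ 0 ∧ 0 < a' r a u v) x y

/-- The fundamental region `F′` of `G′`: nonzero `α ∈ ℕ^{I ∪ {∞}}` with connected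
support and `(α,e_x) ≤ 0` for every vertex `x` of `G′`. -/
def Fund' (a : I r → I r → ℕ) : Set (Q' r) :=
  {α | α ≠ 0 ∧ (∀ x, 0 ≤ α x) ∧ SuppConnected' r a α ∧ ∀ x, B' r a α (e' r x) ≤ 0}

/-- `γ(m,ν) = mδ + (1/2)(ν,ν)δ − ν ∈ Q`. -/
def gam (a : I r → I r → ℕ) (δ : Q r) (m : ℕ) (ν : Q r) : Q r :=
  (m : ℤ) • δ + (B r a ν ν / 2) • δ - ν

/-- The element `e_∞ + γ(m,ν)` of `Q′` (extending `γ(m,ν)` by `1` at the vertex `∞`). -/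
def eInfAdd (α : Q r) : Q' r := fun x => Option.rec 1 α x

end AffineRoots

/-! Pairing `e_∞ + γ(m,ν)` with the simple roots `e_i` of `G` says `(ν, e_i) ≥ -[i = 0]`, that is
`(ν, u) ≥ -u₀` for every `u ≥ 0`. Then `ν ∈ Λ` is dominant for the finite root system on
`I \ {0}`, hence `ν ≥ 0`, and it is minuscule: each root `w` of that system satisfies `w ≤ 0` or
`0 ≤ w ≤ δ`, so `(ν, w) ≤ 1`. If `(ν, ν) > 0`, some `e_i` has `(ν, e_i) = 1`, and the reflection
`s_i ν = ν - e_i` is again nonnegative and minuscule with the same norm but a smaller coordinate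
sum; this descent cannot go on forever. Hence `(ν, ν) = 0`, so `ν ∈ ℤδ` and `ν₀ = 0` forces
`ν = 0`; pairing with `e_∞` then gives `m ≥ 2`. Conversely `e_∞ + mδ` has full support and pairs
to `2 - m` with `e_∞` and to `-[i = 0]` with `e_i`. -/

namespace AffineRoots

variable {r : ℕ} {a : I r → I r → ℕ} {δ : Q r}

lemma even_sum_sum_of_symm {ι : Type*} [Fintype ι] [LinearOrder ι] (f : ι → ι → ℤ)
    (hsymm : ∀ i j, f i j = f j i) (hdiag : ∀ i, Even (f i i)) :
    Even (∑ i, ∑ j, f i j) := by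
  have hsplit : ∀ i j, f i j = ((if i < j then f i j else 0) + if j < i then f j i else 0) +
      if i = j then f i i else 0 := by
    intro i j
    rcases lt_trichotomy i j with hij | rfl | hij
    · simp [hij, hij.not_gt, hij.ne]
    · simp
    · simp [hij, hij.not_gt, hij.ne', hsymm i j]
  rw [sum_congr rfl fun i _ => sum_congr rfl fun j _ => hsplit i j]
  simp only [sum_add_distrib, sum_ite_eq, mem_univ, if_true]
  rw [sum_comm (f := fun i j => if j < i then f j i else 0)]
  exact (Even.add_self _).add (Finset.even_sum _ fun i _ => hdiag i)

section Form

open Matrix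

variable (a)

lemma B_eq_dotProduct (x y : Q r) : B r a x y = x ⬝ᵥ (of (cartan r a) *ᵥ y) := by
  simp [B, dotProduct, mulVec, mul_sum, mul_assoc]

lemma B_add_left (x y z : Q r) : B r a (x + y) z = B r a x z + B r a y z := by
  simp only [B_eq_dotProduct, add_dotProduct]

lemma B_sub_left (x y z : Q r) : B r a (x - y) z = B r a x z - B r a y z := by
  simp only [B_eq_dotProduct, sub_dotProduct]

lemma B_smul_left (t : ℤ) (x y : Q r) : B r a (t • x) y = t * B r a x y := by
  simp only [B_eq_dotProduct, smul_dotProduct, smul_eq_mul]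

lemma B_zero_left (y : Q r) : B r a 0 y = 0 := by
  simp only [B_eq_dotProduct, zero_dotProduct]

lemma B_add_right (x y z : Q r) : B r a x (y + z) = B r a x y + B r a x z := by
  simp only [B_eq_dotProduct, mulVec_add, dotProduct_add]

lemma B_neg_right (x y : Q r) : B r a x (-y) = -B r a x y := by
  simp only [B_eq_dotProduct, mulVec_neg, dotProduct_neg]

lemma B_sub_right (x y z : Q r) : B r a x (y - z) = B r a x y - B r a x z := by
  simp only [B_eq_dotProduct, mulVec_sub, dotProduct_sub]

lemma B_smul_right (t : ℤ) (x y : Q r) : B r a x (t • y) = t * B r a x y := by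
  simp only [B_eq_dotProduct, mulVec_smul, dotProduct_smul, smul_eq_mul]

lemma B_e_right (x : Q r) (i : I r) : B r a x (e r i) = ∑ k, x k * cartan r a k i := by
  simp [B, e, Pi.single_apply]

lemma B_eq_sum_mul_B_e (x y : Q r) : B r a x y = ∑ j, y j * B r a x (e r j) := by
  simp only [B_e_right]
  simp only [B, mul_sum]
  rw [sum_comm]
  exact sum_congr rfl fun i _ => sum_congr rfl fun j _ => by ring

lemma B_symm (hs : ∀ i j, a i j = a j i) (x y : Q r) : B r a x y = B r a y x := by
  have hc : (of (cartan r a))ᵀ = of (cartan r a) := by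
    ext i j; simp [cartan, hs i j, eq_comm]
  rw [B_eq_dotProduct, B_eq_dotProduct, dotProduct_comm, ← vecMul_transpose, hc,
    ← dotProduct_mulVec]

lemma B_e_e (hnl : ∀ i, a i i = 0) (i : I r) : B r a (e r i) (e r i) = 2 := by
  rw [B_e_right, sum_eq_single i] <;> simp_all [e, cartan]

lemma even_B_self (hs : ∀ i j, a i j = a j i) (hnl : ∀ i, a i i = 0) (x : Q r) :
    Even (B r a x x) :=
  even_sum_sum_of_symm _ (fun i j => by simp only [cartan, hs i j, eq_comm (a := i)]; ring)
    fun i => ⟨x i * x i, by simp only [cartan, hnl, if_true]; ring⟩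

end Form

section Cone

variable (a)

lemma posPart_mul_negPart_apply (w : Q r) (i : I r) : w⁺ i * w⁻ i = 0 := by
  rcases le_total (w i) 0 with hw | hw <;> simp [hw]

lemma B_nonpos_of_mul_eq_zero {p q : Q r} (hp : 0 ≤ p) (hq : 0 ≤ q)
    (hpq : ∀ i, p i * q i = 0) : B r a p q ≤ 0 := by
  refine sum_nonpos fun i _ => sum_nonpos fun j _ => ?_
  by_cases hij : i = j
  · subst hij
    rw [mul_right_comm, hpq, zero_mul]
  · have hc : cartan r a i j ≤ 0 := by simp [cartan, hij]
    exact mul_nonpos_of_nonpos_of_nonneg (mul_nonpos_of_nonneg_of_nonpos (hp i) hc) (hq j)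

lemma B_self_eq_posPart_negPart (hs : ∀ i j, a i j = a j i) (w : Q r) :
    B r a w w = B r a w⁺ w⁺ + B r a w⁻ w⁻ - 2 * B r a w⁺ w⁻ := by
  conv_lhs => rw [← posPart_sub_negPart w]
  rw [B_sub_left, B_sub_right, B_sub_right, B_symm a hs w⁻ w⁺]
  ring

end Cone

lemma B_eq_zero_of_B_self_eq_zero (hs : ∀ i j, a i j = a j i)
    (hpsd : ∀ α : Q r, 0 ≤ B r a α α) {x : Q r} (hx : B r a x x = 0) (y : Q r) :
    B r a x y = 0 := by
  by_contra hxy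
  set c := B r a x y
  set d := B r a y y
  have hc : 1 ≤ c ^ 2 := by nlinarith [Int.one_le_abs hxy, sq_abs c]
  -- the form is negative at `t • x + y` for `t = -c (d + 1)`
  have hexp : B r a ((-c * (d + 1)) • x + y) ((-c * (d + 1)) • x + y)
      = -2 * c ^ 2 * (d + 1) + d := by
    simp only [B_add_left, B_add_right, B_smul_left, B_smul_right, hx, B_symm a hs y x]
    ring
  nlinarith [hpsd ((-c * (d + 1)) • x + y), hpsd y]

lemma B_delta_right (h : AffineData r a δ) (x : Q r) : B r a x δ = 0 := by
  rw [B_symm a h.symm]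
  exact (h.radical δ).mpr ⟨1, (one_smul _ _).symm⟩ x

lemma B_delta_left (h : AffineData r a δ) (x : Q r) : B r a δ x = 0 := by
  rw [B_symm a h.symm, B_delta_right h]

lemma eq_zero_of_B_self_eq_zero (h : AffineData r a δ) {x : Q r} (hx : B r a x x = 0)
    (hx0 : x 0 = 0) : x = 0 := by
  obtain ⟨n, rfl⟩ := (h.radical x).mp (B_eq_zero_of_B_self_eq_zero h.symm h.posSemidef hx)
  simp only [Pi.smul_apply, h.delta_zero, smul_eq_mul, mul_one] at hx0
  rw [hx0, zero_smul]

lemma eq_zero_or_pos_of_B_self_eq_zero (h : AffineData r a δ) {x : Q r} (hx : 0 ≤ x)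
    (hxx : B r a x x = 0) : x = 0 ∨ ∀ i, 0 < x i := by
  obtain ⟨n, rfl⟩ := (h.radical x).mp (B_eq_zero_of_B_self_eq_zero h.symm h.posSemidef hxx)
  have hn : 0 ≤ n := by simpa [h.delta_zero] using hx 0
  rcases hn.eq_or_lt with rfl | hn
  · exact Or.inl (zero_smul _ _)
  · exact Or.inr fun i => mul_pos hn (h.delta_pos i)

lemma nonneg_or_nonpos_of_B_posPart_eq_zero (h : AffineData r a δ) {w : Q r}
    (hw : B r a w⁺ w⁺ = 0) : 0 ≤ w ∨ w ≤ 0 := by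
  rcases eq_zero_or_pos_of_B_self_eq_zero h (posPart_nonneg w) hw with hw0 | hpos
  · exact Or.inr (posPart_eq_zero.mp hw0)
  · exact Or.inl fun i => (posPart_pos_iff.mp (hpos i)).le

lemma nonneg_or_nonpos_of_B_self_eq_two (h : AffineData r a δ) {w : Q r} (hw : B r a w w = 2) :
    0 ≤ w ∨ w ≤ 0 := by
  have hcross := B_nonpos_of_mul_eq_zero a (posPart_nonneg w) (negPart_nonneg w)
    (posPart_mul_negPart_apply w)
  obtain ⟨k, hk⟩ := even_B_self a h.symm h.noloops w⁺
  obtain ⟨l, hl⟩ := even_B_self a h.symm h.noloops w⁻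
  have hk0 := h.posSemidef w⁺
  have hl0 := h.posSemidef w⁻
  rcases (by rw [B_self_eq_posPart_negPart a h.symm] at hw; omega :
      B r a w⁺ w⁺ = 0 ∨ B r a w⁻ w⁻ = 0) with hpos | hneg
  · exact nonneg_or_nonpos_of_B_posPart_eq_zero h hpos
  · rw [← posPart_neg] at hneg
    exact (nonneg_or_nonpos_of_B_posPart_eq_zero h hneg).symm.imp neg_nonpos.mp neg_nonneg.mp

lemma nonneg_of_forall_B_nonneg (h : AffineData r a δ) {x : Q r} (hx0 : x 0 = 0)
    (hdom : ∀ u, 0 ≤ u → u 0 = 0 → 0 ≤ B r a x u) : 0 ≤ x := by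
  have hneg0 : x⁻ 0 = 0 := by simp [hx0]
  have hneg : x⁻ = x⁺ - x :=
    eq_sub_of_add_eq (sub_eq_iff_eq_add'.mp (posPart_sub_negPart x)).symm
  have hle : B r a x⁻ x⁻ ≤ 0 := by
    have hcross := B_nonpos_of_mul_eq_zero a (negPart_nonneg x) (posPart_nonneg x)
      fun i => by rw [mul_comm, posPart_mul_negPart_apply]
    have hx := hdom x⁻ (negPart_nonneg x) hneg0
    calc B r a x⁻ x⁻ = B r a x⁻ (x⁺ - x) := by rw [← hneg]
      _ = B r a x⁻ x⁺ - B r a x x⁻ := by rw [B_sub_right, B_symm a h.symm x⁻ x]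
      _ ≤ 0 := by linarith
  exact negPart_eq_zero.mp
    (eq_zero_of_B_self_eq_zero h (le_antisymm hle (h.posSemidef _)) hneg0)

section Reflection

variable (a)

lemma refl_apply_zero {i : I r} (hi : i ≠ 0) (x : Q r) : refl r a i x 0 = x 0 := by
  simp [refl, e, Ne.symm hi]

lemma B_refl_left (hs : ∀ i j, a i j = a j i) (i : I r) (x y : Q r) :
    B r a (refl r a i x) y = B r a x (refl r a i y) := by
  simp only [refl, B_sub_left, B_sub_right, B_smul_left, B_smul_right, B_symm a hs (e r i) y]
  ring

lemma B_refl_refl (hs : ∀ i j, a i j = a j i) (hnl : ∀ i, a i i = 0) (i : I r) (x y : Q r) :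
    B r a (refl r a i x) (refl r a i y) = B r a x y := by
  simp only [refl, B_sub_left, B_sub_right, B_smul_left, B_smul_right, B_e_e a hnl,
    B_symm a hs (e r i)]
  ring

/-- `x` pairs to at most `1` with every real root of the finite root system on `I \ {0}`. -/
def IsMinuscule (x : Q r) : Prop :=
  ∀ w : Q r, w 0 = 0 → B r a w w = 2 → B r a x w ≤ 1

lemma IsMinuscule.refl (hs : ∀ i j, a i j = a j i) (hnl : ∀ i, a i i = 0) {x : Q r}
    (hx : IsMinuscule a x) {i : I r} (hi : i ≠ 0) : IsMinuscule a (refl r a i x) :=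
  fun w hw0 hw2 => B_refl_left a hs i x w ▸
    hx _ ((refl_apply_zero a hi w).trans hw0) ((B_refl_refl a hs hnl i w w).trans hw2)

lemma exists_B_e_eq_one_of_isMinuscule (hnl : ∀ i, a i i = 0) {x : Q r} (hx : 0 ≤ x)
    (hx0 : x 0 = 0) (hmin : IsMinuscule a x) (hpos : 0 < B r a x x) :
    ∃ i, i ≠ 0 ∧ 0 < x i ∧ B r a x (e r i) = 1 := by
  rw [B_eq_sum_mul_B_e] at hpos
  obtain ⟨i, -, hi⟩ := exists_lt_of_sum_lt (s := univ) (f := fun _ => (0 : ℤ)) (by simpa using hpos)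
  have hxi : 0 < x i ∧ 0 < B r a x (e r i) :=
    (pos_and_pos_or_neg_and_neg_of_mul_pos hi).resolve_right fun h => (hx i).not_gt h.1
  have hi0 : i ≠ 0 := by rintro rfl; exact hxi.1.ne' hx0
  refine ⟨i, hi0, hxi.1, le_antisymm ?_ hxi.2⟩
  exact hmin _ (by simp [e, Ne.symm hi0]) (B_e_e a hnl i)

lemma B_self_nonpos_of_isMinuscule (hs : ∀ i j, a i j = a j i) (hnl : ∀ i, a i i = 0)
    {x : Q r} (hx : 0 ≤ x) (hx0 : x 0 = 0) (hmin : IsMinuscule a x) : B r a x x ≤ 0 := by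
  induction hn : (∑ i, x i).toNat using Nat.strong_induction_on generalizing x with
  | _ n ih =>
    by_contra! hpos
    obtain ⟨i, hi0, hxi, hBi⟩ := exists_B_e_eq_one_of_isMinuscule a hnl hx hx0 hmin hpos
    have hrefl : refl r a i x = x - e r i := by rw [refl, hBi, one_smul]
    have hsum : ∑ j, refl r a i x j = ∑ j, x j - 1 := by
      simp [hrefl, sum_sub_distrib, e]
    have hle : x i ≤ ∑ j, x j := single_le_sum (fun j _ => hx j) (mem_univ i)
    have hnonneg : 0 ≤ refl r a i x := fun j => by
      rcases eq_or_ne j i with rfl | hj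
      · simp only [hrefl, e, Pi.zero_apply, Pi.sub_apply, Pi.single_eq_same]; omega
      · simpa [hrefl, e, hj] using hx j
    refine (ih _ (by omega) hnonneg ((refl_apply_zero a hi0 x).trans hx0)
      (hmin.refl a hs hnl hi0) rfl).not_gt ?_
    rwa [B_refl_refl a hs hnl]

end Reflection

lemma isMinuscule_of_neg_apply_zero_le_B (h : AffineData r a δ) {ν : Q r}
    (hlow : ∀ u, 0 ≤ u → -u 0 ≤ B r a ν u) : IsMinuscule a ν := by
  intro w hw0 hw2
  rcases nonneg_or_nonpos_of_B_self_eq_two h hw2 with hw | hw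
  · -- `δ - w` is again a root, and its `0`-coordinate is `1`, so it is positive
    have hδw2 : B r a (δ - w) (δ - w) = 2 := by
      rw [B_sub_left, B_sub_right, B_sub_right, B_delta_left h, B_delta_left h,
        B_delta_right h, hw2]
      ring
    have hδw : 0 ≤ δ - w := (nonneg_or_nonpos_of_B_self_eq_two h hδw2).resolve_right
      fun hle => by simpa [h.delta_zero, hw0] using hle 0
    have := hlow (δ - w) hδw
    rw [B_sub_right, B_delta_right h] at this
    simp only [Pi.sub_apply, h.delta_zero, hw0] at this
    linarith
  · have := hlow (-w) (neg_nonneg.mpr hw)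
    rw [B_neg_right] at this
    simp only [Pi.neg_apply, hw0] at this
    linarith

theorem eq_zero_of_neg_apply_zero_le_B (h : AffineData r a δ) {ν : Q r} (hν0 : ν 0 = 0)
    (hlow : ∀ u, 0 ≤ u → -u 0 ≤ B r a ν u) : ν = 0 := by
  have hnn : 0 ≤ ν := nonneg_of_forall_B_nonneg h hν0 fun u hu hu0 => by
    simpa [hu0] using hlow u hu
  by_contra hne
  have hpos : 0 < B r a ν ν := (h.posSemidef ν).lt_of_ne fun h0 =>
    hne (eq_zero_of_B_self_eq_zero h h0.symm hν0)
  exact (B_self_nonpos_of_isMinuscule a h.symm h.noloops hnn hν0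
    (isMinuscule_of_neg_apply_zero_le_B h hlow)).not_gt hpos

lemma neg_apply_zero_le_B_of_forall_e {x : Q r}
    (hx : ∀ i, -(if i = 0 then 1 else 0) ≤ B r a x (e r i)) (u : Q r) (hu : 0 ≤ u) :
    -u 0 ≤ B r a x u := by
  rw [B_eq_sum_mul_B_e]
  calc -u 0 = ∑ j, u j * -(if j = 0 then 1 else 0) := by simp
    _ ≤ ∑ j, u j * B r a x (e r j) :=
      sum_le_sum fun j _ => mul_le_mul_of_nonneg_left (hx j) (hu j)

section Extended

variable (a)

@[simp] lemma eInfAdd_none (γ : Q r) : eInfAdd r γ none = 1 := rfl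

@[simp] lemma eInfAdd_some (γ : Q r) (i : I r) : eInfAdd r γ (some i) = γ i := rfl

lemma B'_e'_right (x : Q' r) (u : I' r) : B' r a x (e' r u) = ∑ k, x k * cartan' r a k u := by
  simp [B', e', Pi.single_apply]

lemma B'_eInfAdd_e'_none (γ : Q r) : B' r a (eInfAdd r γ) (e' r none) = 2 - γ 0 := by
  rw [B'_e'_right, Fintype.sum_option]
  simp [cartan', a', apply_ite, sum_ite_eq']
  ring

lemma B'_eInfAdd_e'_some (γ : Q r) (i : I r) :
    B' r a (eInfAdd r γ) (e' r (some i)) = B r a γ (e r i) - if i = 0 then 1 else 0 := by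
  rw [B'_e'_right, Fintype.sum_option, B_e_right]
  by_cases hi : i = 0 <;> simp [cartan', cartan, a', hi, neg_add_eq_sub]

lemma a'_connected (hconn : ∀ i j : I r, Relation.ReflTransGen (fun x y => 0 < a x y) i j)
    (x y : I' r) : Relation.ReflTransGen (fun u v => 0 < a' r a u v) x y := by
  have lift : ∀ i j, Relation.ReflTransGen (fun u v => 0 < a' r a u v) (some i) (some j) :=
    fun i j => (hconn i j).lift some fun _ _ huv => huv
  have to0 : ∀ x, Relation.ReflTransGen (fun u v => 0 < a' r a u v) x (some 0)
    | none => .single (by simp [a'])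
    | some i => lift i 0
  have from0 : ∀ y, Relation.ReflTransGen (fun u v => 0 < a' r a u v) (some 0) y
    | none => .single (by simp [a'])
    | some j => lift 0 j
  exact (to0 x).trans (from0 y)

end Extended

lemma B_gam_left (h : AffineData r a δ) (m : ℕ) (ν y : Q r) :
    B r a (gam r a δ m ν) y = -B r a ν y := by
  simp only [gam, B_sub_left, B_add_left, B_smul_left, B_delta_left h]
  ring

lemma gam_zero_right (m : ℕ) : gam r a δ m 0 = (m : ℤ) • δ := by
  simp [gam, B_zero_left]

lemma eInfAdd_smul_delta_mem_fund' (h : AffineData r a δ) {m : ℕ} (hm : 2 ≤ m) :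
    eInfAdd r ((m : ℤ) • δ) ∈ Fund' r a := by
  have hpos : ∀ x, 0 < eInfAdd r ((m : ℤ) • δ) x
    | none => one_pos
    | some i => mul_pos (by omega) (h.delta_pos i)
  refine ⟨fun h0 => (hpos none).ne' (congrFun h0 none), fun x => (hpos x).le,
    fun x y _ _ => Relation.ReflTransGen.mono (fun u v huv => ⟨(hpos u).ne', (hpos v).ne', huv⟩)
      x y (a'_connected a h.connected x y), ?_⟩
  rintro (_ | i)
  · rw [B'_eInfAdd_e'_none, Pi.smul_apply, h.delta_zero, smul_eq_mul, mul_one]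
    omega
  · rw [B'_eInfAdd_e'_some, B_smul_left, B_delta_left h]
    split_ifs <;> simp

end AffineRoots

open AffineRoots in
/-- For every `m ∈ ℕ` and `ν ∈ Λ = {ν ∈ Q : ν_0 = 0}`, the element `e_∞ + γ(m,ν)` of
`Q′` belongs to the fundamental region `F′` of the graph `G′` if and only if `ν = 0` and
`m > 1`. -/
theorem eInfAdd_gam_mem_fund_iff (r : ℕ) (a : I r → I r → ℕ) (δ : Q r)
    (hdata : AffineData r a δ) (m : ℕ) (ν : Q r) (hν : ν 0 = 0) :
    eInfAdd r (gam r a δ m ν) ∈ Fund' r a ↔ ν = 0 ∧ 1 < m := by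
  constructor
  · rintro ⟨-, -, -, hB⟩
    have hlow := neg_apply_zero_le_B_of_forall_e fun i => by
      have := hB (some i)
      rw [B'_eInfAdd_e'_some, B_gam_left hdata] at this
      linarith
    obtain rfl := eq_zero_of_neg_apply_zero_le_B hdata hν hlow
    have := hB none
    rw [B'_eInfAdd_e'_none, gam_zero_right] at this
    simp only [Pi.smul_apply, hdata.delta_zero, smul_eq_mul, mul_one] at this
    exact ⟨rfl, by omega⟩
  · rintro ⟨rfl, hm⟩
    rw [gam_zero_right]
    exact eInfAdd_smul_delta_mem_fund' hdata hm
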